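/- arXiv:2505.13635 — 3 statements merged into one kernel-verified Lean document; each statement's English description precedes it below -/
import Mathlib

section
/- Let G be a 2-vertex-connected outerplanar graph with vertices 1,…,n in clockwise order on the outer face, and let i,j ∈ [n] with i ≠ j+1. Let f1 and f2 be the unique bounded faces containing the edges {i−1,i} and {j,j+1} respectively. Then the cut δ_G([i,j]) consists exactly of the edges {i−1,i}, {j,j+1}, and the edges of G corresponding to the edges of the unique path between f1 and f2 in the weak dual tree G*. -/
open scoped Classical

/-- `x` lies strictly between `a` and `b` in the clockwise cyclic order of `Fin n`. -/
def btw {n : ℕ} (a x b : Fin n) : Prop :=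
  (a < x ∧ x < b) ∨ (b < a ∧ (a < x ∨ x < b))

/-- `z` is a chord of the `n`-gon: it joins two distinct, non-consecutive vertices. -/
def IsChordal (n : ℕ) [NeZero n] (z : Sym2 (Fin n)) : Prop :=
  ∃ a b : Fin n, z = s(a, b) ∧ a ≠ b ∧ b ≠ a + 1 ∧ a ≠ b + 1

/-- Two chords cross: their endpoints strictly interleave around the cycle. -/
def ChordCross {n : ℕ} (z w : Sym2 (Fin n)) : Prop :=
  ∃ a b c d : Fin n, z = s(a, b) ∧ w = s(c, d) ∧ _root_.btw a c b ∧ _root_.btw b d a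

/-- A 2-vertex-connected outerplanar graph, encoded by its fixed outerplanar embedding:
the outer (Hamiltonian) cycle `0,1,…,n-1` together with a set of pairwise noncrossing
chords. -/
structure OPGraph (n : ℕ) [NeZero n] where
  chords : Finset (Sym2 (Fin n))
  isChord : ∀ z ∈ chords, IsChordal n z
  noncross : ∀ z ∈ chords, ∀ w ∈ chords, ¬ ChordCross z w

/-- The edges of the outerplanar graph: the outer cycle edges together with the chords. -/
def OPGraph.edge {n : ℕ} [NeZero n] (Gp : OPGraph n) (z : Sym2 (Fin n)) : Prop :=
  (∃ a : Fin n, z = s(a, a + 1)) ∨ z ∈ Gp.chords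

/-- `v` is the clockwise successor of `u` among the vertices of `F`. -/
def succIn {n : ℕ} (F : Finset (Fin n)) (u v : Fin n) : Prop :=
  u ∈ F ∧ v ∈ F ∧ u ≠ v ∧ ∀ w ∈ F, ¬ _root_.btw u w v

/-- `z` is an edge of the boundary cycle of the vertex set `F`. -/
def BoundaryEdge {n : ℕ} (F : Finset (Fin n)) (z : Sym2 (Fin n)) : Prop :=
  ∃ u v : Fin n, z = s(u, v) ∧ succIn F u v

/-- `F` is the vertex set of a bounded face of the outerplanar graph `Gp`:
its cyclically consecutive pairs are edges of `Gp`, and `Gp` has no edge joining two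
non-consecutive vertices of `F`. -/
def OPGraph.IsFace {n : ℕ} [NeZero n] (Gp : OPGraph n) (F : Finset (Fin n)) : Prop :=
  3 ≤ F.card ∧
  (∀ u v : Fin n, succIn F u v → Gp.edge s(u, v)) ∧
  (∀ u ∈ F, ∀ v ∈ F, u ≠ v → Gp.edge s(u, v) → succIn F u v ∨ succIn F v u)

/-- The bounded faces of `Gp`. -/
def OPGraph.Face {n : ℕ} [NeZero n] (Gp : OPGraph n) := {F : Finset (Fin n) // Gp.IsFace F}

/-- The weak dual of `Gp`: vertices are the bounded faces, two faces being adjacent when they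
share a chord of `Gp`. -/
def OPGraph.weakDual {n : ℕ} [NeZero n] (Gp : OPGraph n) : SimpleGraph Gp.Face :=
  SimpleGraph.fromRel
    (fun F F' => ∃ z ∈ Gp.chords, BoundaryEdge F.1 z ∧ BoundaryEdge F'.1 z)


/-- The interval `[i,j]` of vertices going clockwise from `i` to `j` (wrapping around). -/
def interval {n : ℕ} (i j : Fin n) : Set (Fin n) := {k | (k - i).val ≤ (j - i).val}

/-- The cut `δ_G(S)`: all edges of `Gp` with exactly one endpoint in `S`. -/
def OPGraph.cut {n : ℕ} [NeZero n] (Gp : OPGraph n) (S : Set (Fin n)) : Set (Sym2 (Fin n)) :=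
  {z | Gp.edge z ∧ ∃ u v : Fin n, z = s(u, v) ∧ u ∈ S ∧ v ∉ S}

/-- The chords of `Gp` corresponding to the edges of a walk `p` in the weak dual. -/
def pathChords {n : ℕ} [NeZero n] (Gp : OPGraph n) {F1 F2 : Gp.Face}
    (p : Gp.weakDual.Walk F1 F2) : Set (Sym2 (Fin n)) :=
  {z | z ∈ Gp.chords ∧ ∃ F F' : Gp.Face,
    s(F, F') ∈ p.edges ∧ BoundaryEdge F.1 z ∧ BoundaryEdge F'.1 z}

/-!
Every edge `ab` of `G` sorts the bounded faces into those contained in the arc `[a,b]` and those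
contained in `[b,a]`: a face with vertices strictly on both sides would have a boundary edge
crossing `ab`. The face on a given side of `ab` that contains `a` and `b` is unique, so the two
faces sharing a chord lie on opposite sides of it, while two faces sharing any other chord lie on
the same side. Hence, walking along a path in the weak dual tree, the side of a chord `ab` changes
exactly when the path crosses the dual edge of `ab`. Finally, a chord lies in `δ([i,j])` iff the
outer edges `{i-1,i}` and `{j,j+1}` (equivalently the faces `f1`, `f2` containing them) lie on
different sides of it, and an outer edge lies in `δ([i,j])` iff it is one of these two.

Cyclic-order facts are proved by measuring each vertex `x` by its clockwise distance
`(x - o).val` from a suitable origin `o`, which turns them into linear arithmetic.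
-/

namespace Fin

variable {n : ℕ}

theorem val_sub_eq_ite (x a : Fin n) :
    (x - a).val = if a.val ≤ x.val then x.val - a.val else n + x.val - a.val := by
  split_ifs with h
  · exact sub_val_of_le h
  · exact coe_sub_iff_lt.2 (not_le.1 h)

variable [NeZero n]

theorem val_sub_left_inj {a b c : Fin n} : (a - b).val = (c - b).val ↔ a = c :=
  val_inj.trans sub_left_inj

theorem val_add_one_sub (c o : Fin n) :
    (c + 1 - o).val = if (c - o).val + 1 = n then 0 else (c - o).val + 1 := by
  rw [add_sub_right_comm, val_add, val_one']
  have := (c - o).isLt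
  split_ifs with h
  · rw [Nat.add_mod_mod, h, Nat.mod_self]
  · rw [Nat.add_mod_mod, Nat.mod_eq_of_lt (by omega)]

end Fin

open Fin

section CyclicOrder

variable {n : ℕ}

theorem btw_iff_val_sub_lt {a x b : Fin n} :
    _root_.btw a x b ↔ 0 < (x - a).val ∧ (x - a).val < (b - a).val := by
  unfold _root_.btw
  simp only [Fin.lt_def, val_sub_eq_ite]
  have := a.isLt; have := x.isLt; have := b.isLt
  split_ifs <;> omega

theorem succIn_iff_boundaryEdge {F : Finset (Fin n)} {a b : Fin n} :
    BoundaryEdge F s(a, b) ↔ succIn F a b ∨ succIn F b a := by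
  constructor
  · rintro ⟨u, v, huv, h⟩
    rcases Sym2.eq_iff.1 huv with ⟨rfl, rfl⟩ | ⟨rfl, rfl⟩
    exacts [Or.inl h, Or.inr h]
  · rintro (h | h)
    exacts [⟨a, b, rfl, h⟩, ⟨b, a, Sym2.eq_swap, h⟩]

theorem mem_of_boundaryEdge {F : Finset (Fin n)} {a b : Fin n} (h : BoundaryEdge F s(a, b)) :
    a ∈ F ∧ b ∈ F :=
  (succIn_iff_boundaryEdge.1 h).elim (fun h => ⟨h.1, h.2.1⟩) (fun h => ⟨h.2.1, h.1⟩)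

variable [NeZero n]

theorem btw_sub_right_iff {a x b : Fin n} (o : Fin n) :
    _root_.btw (a - o) (x - o) (b - o) ↔ _root_.btw a x b := by
  simp only [btw_iff_val_sub_lt, sub_sub_sub_cancel_right]

theorem btw_iff_val_sub {a x b : Fin n} (o : Fin n) :
    _root_.btw a x b ↔ (a - o).val < (x - o).val ∧ (x - o).val < (b - o).val ∨
      (b - o).val < (a - o).val ∧ ((a - o).val < (x - o).val ∨ (x - o).val < (b - o).val) :=
  (btw_sub_right_iff o).symm

theorem mem_interval_iff_val_sub {a x b : Fin n} (o : Fin n) :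
    x ∈ interval a b ↔ (a - o).val ≤ (x - o).val ∧ (x - o).val ≤ (b - o).val ∨
      (b - o).val < (a - o).val ∧
        ((a - o).val ≤ (x - o).val ∨ (x - o).val ≤ (b - o).val) := by
  change (x - a).val ≤ (b - a).val ↔ _
  rw [← sub_sub_sub_cancel_right x a o, ← sub_sub_sub_cancel_right b a o,
    val_sub_eq_ite (x - o), val_sub_eq_ite (b - o)]
  have := (x - o).isLt; have := (b - o).isLt; have := (a - o).isLt
  split_ifs <;> omega

theorem not_btw_add_one (c x : Fin n) : ¬ _root_.btw c x (c + 1) := by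
  rw [btw_iff_val_sub_lt, add_sub_cancel_left, val_one']
  have := Nat.mod_le 1 n
  omega

theorem notMem_interval_iff_btw {a b x : Fin n} (hab : a ≠ b) :
    x ∉ interval a b ↔ _root_.btw b x a := by
  rw [Ne, ← val_sub_left_inj (b := a)] at hab
  rw [mem_interval_iff_val_sub a, btw_iff_val_sub a]
  simp only [sub_self, val_zero] at hab ⊢
  omega

theorem eq_or_eq_of_mem_interval_of_mem_interval {a b x : Fin n} (h : x ∈ interval a b)
    (h' : x ∈ interval b a) : x = a ∨ x = b := by
  rw [← val_sub_left_inj (b := a), ← val_sub_left_inj (b := a)]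
  rw [mem_interval_iff_val_sub a] at h h'
  simp only [sub_self, val_zero] at h h' ⊢
  omega

/-- `u` and `v` are the vertices of `F` nearest to `x` counterclockwise and clockwise. -/
theorem exists_succIn_btw {F : Finset (Fin n)} {x : Fin n} (hx : x ∉ F) (hF : F.Nontrivial) :
    ∃ u v, succIn F u v ∧ _root_.btw u x v := by
  obtain ⟨u, hu, hmax⟩ := F.exists_max_image (fun w => (w - x).val) hF.nonempty
  obtain ⟨v, hv, hmin⟩ := F.exists_min_image (fun w => (w - x).val) hF.nonempty
  have hpos : ∀ w ∈ F, 0 < (w - x).val := fun w hw =>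
    Nat.pos_of_ne_zero fun h => hx (sub_eq_zero.1 (val_eq_zero_iff.1 h) ▸ hw)
  have huv : (v - x).val < (u - x).val := by
    obtain ⟨w, hw, hwu⟩ := hF.exists_ne u
    have := hmax w hw; have := hmin w hw
    have : (w - x).val ≠ (u - x).val := fun h => hwu (val_sub_left_inj.1 h)
    omega
  refine ⟨u, v, ⟨hu, hv, fun h => by subst h; omega, fun w hw => ?_⟩, ?_⟩
  · have := hmax w hw; have := hmin w hw
    rw [btw_iff_val_sub x]
    omega
  · have := hpos v hv
    rw [btw_iff_val_sub x, sub_self, val_zero]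
    omega

end CyclicOrder

namespace OPGraph

variable {n : ℕ} [NeZero n] {Gp : OPGraph n}

theorem mk_mem_cut_iff {S : Set (Fin n)} {u v : Fin n} :
    s(u, v) ∈ Gp.cut S ↔ Gp.edge s(u, v) ∧ (u ∈ S ↔ v ∉ S) := by
  refine and_congr_right fun _ => ⟨?_, ?_⟩
  · rintro ⟨x, y, hxy, hx, hy⟩
    rcases Sym2.eq_iff.1 hxy with ⟨rfl, rfl⟩ | ⟨rfl, rfl⟩ <;> tauto
  · intro h
    by_cases hu : u ∈ S
    · exact ⟨u, v, rfl, hu, h.1 hu⟩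
    · exact ⟨v, u, Sym2.eq_swap, not_not.1 (mt h.2 hu), hu⟩

theorem mk_add_one_notMem_chords (c : Fin n) : s(c, c + 1) ∉ Gp.chords := fun h => by
  obtain ⟨a, b, he, -, hba, hab⟩ := Gp.isChord _ h
  rcases Sym2.eq_iff.1 he with ⟨rfl, rfl⟩ | ⟨rfl, rfl⟩
  exacts [hba rfl, hab rfl]

theorem ne_and_ne_add_one_of_mem_chords {a b : Fin n} (hz : s(a, b) ∈ Gp.chords) :
    a ≠ b ∧ b ≠ a + 1 ∧ a ≠ b + 1 := by
  obtain ⟨c, d, hcd, h⟩ := Gp.isChord _ hz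
  rcases Sym2.eq_iff.1 hcd with ⟨rfl, rfl⟩ | ⟨rfl, rfl⟩
  exacts [h, ⟨h.1.symm, h.2.2, h.2.1⟩]

theorem mem_chords_of_edge {u v x y : Fin n} (he : Gp.edge s(u, v)) (hx : _root_.btw u x v)
    (hy : _root_.btw v y u) : s(u, v) ∈ Gp.chords := by
  rcases he with ⟨c, hc⟩ | h
  · rcases Sym2.eq_iff.1 hc with ⟨rfl, rfl⟩ | ⟨rfl, rfl⟩
    exacts [absurd hx (not_btw_add_one _ _), absurd hy (not_btw_add_one _ _)]
  · exact h

theorem not_crossing_edges {u v a b : Fin n} (he : Gp.edge s(u, v)) (he' : Gp.edge s(a, b))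
    (ha : _root_.btw u a v) (hb : _root_.btw v b u) : False := by
  have hv : _root_.btw a v b ∧ _root_.btw b u a := by
    simp only [btw_iff_val_sub u, sub_self, val_zero] at ha hb ⊢
    omega
  exact Gp.noncross _ (mem_chords_of_edge he ha hb) _ (mem_chords_of_edge he' hv.1 hv.2)
    ⟨u, v, a, b, rfl, rfl, ha, hb⟩

namespace IsFace

variable {F F' : Finset (Fin n)}

theorem nontrivial (hF : Gp.IsFace F) : F.Nontrivial :=
  Finset.one_lt_card_iff_nontrivial.1 (by have := hF.1; omega)

theorem exists_mem_ne_ne (hF : Gp.IsFace F) (a b : Fin n) : ∃ w ∈ F, w ≠ a ∧ w ≠ b := by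
  have hcard : ({a, b} : Finset (Fin n)).card < F.card := by
    have := hF.1; have := Finset.card_le_two (a := a) (b := b); omega
  obtain ⟨w, hw, hwab⟩ := Finset.exists_mem_notMem_of_card_lt_card hcard
  simp only [Finset.mem_insert, Finset.mem_singleton, not_or] at hwab
  exact ⟨w, hw, hwab⟩

theorem edge_of_boundaryEdge (hF : Gp.IsFace F) {a b : Fin n} (h : BoundaryEdge F s(a, b)) :
    Gp.edge s(a, b) ∧ a ≠ b := by
  rcases succIn_iff_boundaryEdge.1 h with h | h
  · exact ⟨hF.2.1 a b h, h.2.2.1⟩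
  · exact ⟨Sym2.eq_swap ▸ hF.2.1 b a h, h.2.2.1.symm⟩

/-- Otherwise the boundary edge of `F` passing over `b` would cross `ab`. -/
theorem mem_of_btw_of_btw (hF : Gp.IsFace F) {a b p q : Fin n} (he : Gp.edge s(a, b))
    (hp : p ∈ F) (hq : q ∈ F) (hbpa : _root_.btw b p a) (haqb : _root_.btw a q b) :
    b ∈ F := by
  by_contra hb
  obtain ⟨u, v, huv, hubv⟩ := exists_succIn_btw hb hF.nontrivial
  have hvau : _root_.btw v a u := by
    have := huv.2.2.2 p hp
    have := huv.2.2.2 q hq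
    simp only [btw_iff_val_sub a, sub_self, val_zero] at *
    omega
  exact not_crossing_edges (hF.2.1 u v huv) (Sym2.eq_swap ▸ he) hubv hvau

theorem subset_interval_or (hF : Gp.IsFace F) {a b : Fin n} (he : Gp.edge s(a, b))
    (hab : a ≠ b) :
    (F : Set (Fin n)) ⊆ interval a b ∨ (F : Set (Fin n)) ⊆ interval b a := by
  by_contra! h
  obtain ⟨⟨p, hp, hpab⟩, ⟨q, hq, hqba⟩⟩ := And.imp Set.not_subset.1 Set.not_subset.1 h
  rw [notMem_interval_iff_btw hab] at hpab
  rw [notMem_interval_iff_btw hab.symm] at hqba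
  have ha := hF.mem_of_btw_of_btw (Sym2.eq_swap ▸ he) hq hp hqba hpab
  have hb := hF.mem_of_btw_of_btw he hp hq hpab hqba
  rcases hF.2.2 a ha b hb hab he with h | h
  exacts [h.2.2.2 q hq hqba, h.2.2.2 p hp hpab]

theorem subset_interval_iff (hF : Gp.IsFace F) {a b c d : Fin n}
    (hcd : BoundaryEdge F s(c, d)) (he : Gp.edge s(a, b)) (hab : a ≠ b)
    (hne : s(c, d) ≠ s(a, b)) :
    (F : Set (Fin n)) ⊆ interval a b ↔ c ∈ interval a b ∧ d ∈ interval a b := by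
  obtain ⟨hc, hd⟩ := mem_of_boundaryEdge hcd
  refine ⟨fun h => ⟨h hc, h hd⟩, fun ⟨hca, hda⟩ => ?_⟩
  refine (hF.subset_interval_or he hab).resolve_right fun h => hne ?_
  have hcd' := (hF.edge_of_boundaryEdge hcd).2
  rcases eq_or_eq_of_mem_interval_of_mem_interval hca (h hc) with rfl | rfl <;>
    rcases eq_or_eq_of_mem_interval_of_mem_interval hda (h hd) with rfl | rfl
  exacts [absurd rfl hcd', rfl, Sym2.eq_swap, absurd rfl hcd']

/-- If `x ∈ F` were missing from `F'`, the boundary edge `uv` of `F'` passing over `x` would be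
an edge with `F` on the side of `x`; this forces `uv = ab`, leaving no room for a third vertex
of `F'`. -/
theorem subset_of_subset_interval (hF : Gp.IsFace F) (hF' : Gp.IsFace F') {a b : Fin n}
    (ha : a ∈ F) (hb : b ∈ F) (ha' : a ∈ F') (hb' : b ∈ F')
    (h : (F : Set (Fin n)) ⊆ interval a b) (h' : (F' : Set (Fin n)) ⊆ interval a b) :
    F ⊆ F' := by
  intro x hx
  by_contra hx'
  obtain ⟨u, v, huv, huxv⟩ := exists_succIn_btw hx' hF'.nontrivial
  have hFuv : (F : Set (Fin n)) ⊆ interval u v :=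
    (hF.subset_interval_or (hF'.2.1 u v huv) huv.2.2.1).resolve_right fun hvu =>
      (notMem_interval_iff_btw huv.2.2.1.symm).2 huxv (hvu hx)
  obtain ⟨w, hw, hwa, hwb⟩ := hF'.exists_mem_ne_ne a b
  have := huv.2.2.2 a ha'; have := huv.2.2.2 b hb'; have := huv.2.2.2 w hw
  have := h hx; have := h' huv.1; have := h' huv.2.1; have := h' hw
  have := hFuv ha; have := hFuv hb
  have hxa : x ≠ a := fun h => hx' (h ▸ ha')
  have hxb : x ≠ b := fun h => hx' (h ▸ hb')
  have huv' := huv.2.2.1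
  rw [Ne, ← val_sub_left_inj (b := a)] at hwa hwb hxa hxb huv'
  simp only [btw_iff_val_sub a, mem_interval_iff_val_sub a, sub_self, val_zero] at *
  omega

theorem eq_of_subset_interval (hF : Gp.IsFace F) (hF' : Gp.IsFace F') {a b : Fin n}
    (ha : a ∈ F) (hb : b ∈ F) (ha' : a ∈ F') (hb' : b ∈ F')
    (h : (F : Set (Fin n)) ⊆ interval a b) (h' : (F' : Set (Fin n)) ⊆ interval a b) :
    F = F' :=
  (hF.subset_of_subset_interval hF' ha hb ha' hb' h h').antisymm
    (hF'.subset_of_subset_interval hF ha' hb' ha hb h' h)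

end IsFace

namespace Face

variable {F F' G : Gp.Face}

theorem subset_interval_iff_not (hne : F ≠ F') {a b : Fin n} (h : BoundaryEdge F.1 s(a, b))
    (h' : BoundaryEdge F'.1 s(a, b)) :
    (F.1 : Set (Fin n)) ⊆ interval a b ↔ ¬ (F'.1 : Set (Fin n)) ⊆ interval a b := by
  obtain ⟨he, hab⟩ := F.2.edge_of_boundaryEdge h
  obtain ⟨ha, hb⟩ := mem_of_boundaryEdge h
  obtain ⟨ha', hb'⟩ := mem_of_boundaryEdge h'
  refine ⟨fun hF hF' => hne (Subtype.ext (F.2.eq_of_subset_interval F'.2 ha hb ha' hb' hF hF')),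
    fun hF' => by_contra fun hF => hne (Subtype.ext ?_)⟩
  exact F.2.eq_of_subset_interval F'.2 hb ha hb' ha'
    ((F.2.subset_interval_or he hab).resolve_left hF)
    ((F'.2.subset_interval_or he hab).resolve_left hF')

theorem eq_or_eq_of_boundaryEdge (hne : F ≠ F') {z : Sym2 (Fin n)} (h : BoundaryEdge F.1 z)
    (h' : BoundaryEdge F'.1 z) (hG : BoundaryEdge G.1 z) : G = F ∨ G = F' := by
  induction z using Sym2.ind with | h a b => ?_
  by_contra! hG'
  have := subset_interval_iff_not hG'.1 hG h
  have := subset_interval_iff_not hG'.2 hG h'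
  have := subset_interval_iff_not hne h h'
  tauto

end Face

theorem subset_interval_iff_of_adj {F F' : Gp.Face} (hadj : Gp.weakDual.Adj F F') {a b : Fin n}
    (he : Gp.edge s(a, b)) (hab : a ≠ b) :
    ((F.1 : Set (Fin n)) ⊆ interval a b ↔ (F'.1 : Set (Fin n)) ⊆ interval a b) ↔
      ¬ (BoundaryEdge F.1 s(a, b) ∧ BoundaryEdge F'.1 s(a, b)) := by
  obtain ⟨hne, w, hw, hw'⟩ :
      F ≠ F' ∧ ∃ w, BoundaryEdge F.1 w ∧ BoundaryEdge F'.1 w := by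
    obtain ⟨hne, ⟨w, -, h, h'⟩ | ⟨w, -, h', h⟩⟩ := hadj
    exacts [⟨hne, w, h, h'⟩, ⟨hne, w, h, h'⟩]
  by_cases hsh : BoundaryEdge F.1 s(a, b) ∧ BoundaryEdge F'.1 s(a, b)
  · have := Face.subset_interval_iff_not hne hsh.1 hsh.2
    tauto
  · have hwz : w ≠ s(a, b) := fun h => hsh (h ▸ ⟨hw, hw'⟩)
    induction w using Sym2.ind with | h c d => ?_
    rw [F.2.subset_interval_iff hw he hab hwz, F'.2.subset_interval_iff hw' he hab hwz]
    tauto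

theorem mem_pathChords_cons {F F' G : Gp.Face} (h : Gp.weakDual.Adj F F')
    (q : Gp.weakDual.Walk F' G) {z : Sym2 (Fin n)} :
    z ∈ pathChords Gp (.cons h q) ↔
      z ∈ Gp.chords ∧ BoundaryEdge F.1 z ∧ BoundaryEdge F'.1 z ∨ z ∈ pathChords Gp q := by
  simp only [pathChords, Set.mem_ofPred_eq, SimpleGraph.Walk.edges_cons, List.mem_cons,
    Sym2.eq_iff]
  constructor
  · rintro ⟨hz, G, G', (⟨rfl, rfl⟩ | ⟨rfl, rfl⟩) | hq, hG, hG'⟩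
    exacts [Or.inl ⟨hz, hG, hG'⟩, Or.inl ⟨hz, hG', hG⟩, Or.inr ⟨hz, G, G', hq, hG, hG'⟩]
  · rintro (⟨hz, hF, hF'⟩ | ⟨hz, G, G', hq, hG, hG'⟩)
    exacts [⟨hz, F, F', Or.inl (Or.inl ⟨rfl, rfl⟩), hF, hF'⟩,
      ⟨hz, G, G', Or.inr hq, hG, hG'⟩]

/-- A chord lies on the boundary of at most two faces, so it corresponds to a single edge of
the weak dual, which a path crosses at most once. -/
theorem notMem_pathChords_of_cons_isPath {F F' G : Gp.Face} (h : Gp.weakDual.Adj F F')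
    (q : Gp.weakDual.Walk F' G) (hp : (SimpleGraph.Walk.cons h q).IsPath) {z : Sym2 (Fin n)}
    (hz : BoundaryEdge F.1 z) (hz' : BoundaryEdge F'.1 z) : z ∉ pathChords Gp q := by
  rintro ⟨-, H, H', hmem, hH, hH'⟩
  have hF : F ∉ q.support := ((SimpleGraph.Walk.cons_isPath_iff h q).1 hp).2
  rcases Face.eq_or_eq_of_boundaryEdge h.ne hz hz' hH with rfl | rfl
  · exact hF (q.fst_mem_support_of_mem_edges hmem)
  rcases Face.eq_or_eq_of_boundaryEdge h.ne hz hz' hH' with rfl | rfl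
  · exact hF (q.snd_mem_support_of_mem_edges hmem)
  · exact (q.adj_of_mem_edges hmem).ne rfl

theorem subset_interval_iff_iff_notMem_pathChords {a b : Fin n} (hz : s(a, b) ∈ Gp.chords)
    {F G : Gp.Face} (q : Gp.weakDual.Walk F G) (hq : q.IsPath) :
    ((F.1 : Set (Fin n)) ⊆ interval a b ↔ (G.1 : Set (Fin n)) ⊆ interval a b) ↔
      s(a, b) ∉ pathChords Gp q := by
  obtain ⟨hab, -⟩ := ne_and_ne_add_one_of_mem_chords hz
  induction q with
  | nil => simp [pathChords]
  | @cons F F' G h q ih =>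
    have hstep := subset_interval_iff_of_adj h (Or.inr hz) hab
    have hrest := ih hq.of_cons
    rw [mem_pathChords_cons]
    by_cases hsh : BoundaryEdge F.1 s(a, b) ∧ BoundaryEdge F'.1 s(a, b)
    · have hFF' := mt hstep.1 (not_not.2 hsh)
      have hF'G := hrest.2 (notMem_pathChords_of_cons_isPath h q hq hsh.1 hsh.2)
      exact iff_of_false (fun hFG => hFF' (hFG.trans hF'G.symm))
        (not_not.2 (Or.inl ⟨hz, hsh⟩))
    · rw [hstep.2 hsh, hrest]
      simp only [hsh, and_false, false_or]

theorem mk_mem_cut_interval_iff_of_mem_chords {a b c j : Fin n} (hz : s(a, b) ∈ Gp.chords) :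
    s(a, b) ∈ Gp.cut (interval (c + 1) j) ↔
      ¬ ((c ∈ interval a b ∧ c + 1 ∈ interval a b) ↔
        (j ∈ interval a b ∧ j + 1 ∈ interval a b)) := by
  obtain ⟨hab, hba, hab'⟩ := ne_and_ne_add_one_of_mem_chords hz
  rw [mk_mem_cut_iff, and_iff_right (show Gp.edge s(a, b) from Or.inr hz)]
  rw [Ne, ← val_sub_left_inj (b := a)] at hab hba hab'
  simp only [mem_interval_iff_val_sub a, val_add_one_sub _ a, sub_self, val_zero] at *
  have := (b - a).isLt; have := (c - a).isLt; have := (j - a).isLt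
  split_ifs at * <;> omega

theorem mem_cut_interval_iff_of_notMem_chords {z : Sym2 (Fin n)} {c j : Fin n}
    (hz : z ∉ Gp.chords) (hcj : c ≠ j) :
    z ∈ Gp.cut (interval (c + 1) j) ↔ z = s(c, c + 1) ∨ z = s(j, j + 1) := by
  have key : ∀ d, s(d, d + 1) ∈ Gp.cut (interval (c + 1) j) ↔ d = c ∨ d = j := by
    intro d
    rw [mk_mem_cut_iff, and_iff_right (show Gp.edge s(d, d + 1) from Or.inl ⟨d, rfl⟩)]
    rw [Ne, ← val_sub_left_inj (b := c)] at hcj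
    rw [← val_sub_left_inj (b := c), ← val_sub_left_inj (b := c)]
    simp only [mem_interval_iff_val_sub c, val_add_one_sub _ c, sub_self, val_zero] at *
    have := (d - c).isLt; have := (j - c).isLt
    split_ifs at * <;> omega
  constructor
  · intro hcut
    obtain ⟨d, rfl⟩ := hcut.1.resolve_right hz
    rcases (key d).1 hcut with rfl | rfl
    exacts [Or.inl rfl, Or.inr rfl]
  · rintro (rfl | rfl)
    exacts [(key c).2 (Or.inl rfl), (key j).2 (Or.inr rfl)]

end OPGraph

open OPGraph

theorem stmt_4_general (n : ℕ) [NeZero n] (Gp : OPGraph n)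
    (i j : Fin n) (hij : i ≠ j + 1)
    (F1 F2 : Gp.Face)
    (hF1 : BoundaryEdge F1.1 s(i - 1, i)) (hF2 : BoundaryEdge F2.1 s(j, j + 1))
    (p : Gp.weakDual.Walk F1 F2) (hp : p.IsPath) :
    Gp.cut (interval i j) = {s(i - 1, i), s(j, j + 1)} ∪ pathChords Gp p := by
  obtain ⟨c, rfl⟩ : ∃ c, c + 1 = i := ⟨i - 1, sub_add_cancel i 1⟩
  rw [add_sub_cancel_right] at hF1 ⊢
  have hcj : c ≠ j := fun h => hij (h ▸ rfl)
  ext z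
  simp only [Set.mem_union, Set.mem_insert_iff, Set.mem_singleton_iff]
  by_cases hz : z ∈ Gp.chords
  · induction z using Sym2.ind with | h a b => ?_
    have hc : s(c, c + 1) ≠ s(a, b) := (ne_of_mem_of_not_mem hz (mk_add_one_notMem_chords c)).symm
    have hj : s(j, j + 1) ≠ s(a, b) := (ne_of_mem_of_not_mem hz (mk_add_one_notMem_chords j)).symm
    obtain ⟨hab, -⟩ := ne_and_ne_add_one_of_mem_chords hz
    rw [mk_mem_cut_interval_iff_of_mem_chords hz,
      ← F1.2.subset_interval_iff hF1 (Or.inr hz) hab hc,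
      ← F2.2.subset_interval_iff hF2 (Or.inr hz) hab hj,
      subset_interval_iff_iff_notMem_pathChords hz p hp, not_not]
    simp only [hc.symm, hj.symm, false_or]
  · have hp' : z ∉ pathChords Gp p := fun h => hz h.1
    rw [mem_cut_interval_iff_of_notMem_chords hz hcj]
    simp only [hp', or_false]

/-- **Lemma (structure of interval cuts in outerplanar graphs).**
For `i ≠ j+1`, let `f1`, `f2` be the (unique) bounded faces of `Gp` containing the outer edges
`{i-1,i}` and `{j,j+1}` respectively.  Then `δ_G([i,j])` consists exactly of `{i-1,i}`,
`{j,j+1}`, and the chords corresponding to the edges of the (unique) path between `f1` and `f2`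
in the weak dual tree. -/
theorem stmt_4 (n : ℕ) [NeZero n] (hn : 3 ≤ n) (Gp : OPGraph n)
    (i j : Fin n) (hij : i ≠ j + 1)
    (F1 F2 : Gp.Face)
    (hF1 : BoundaryEdge F1.1 s(i - 1, i)) (hF2 : BoundaryEdge F2.1 s(j, j + 1))
    (p : Gp.weakDual.Walk F1 F2) (hp : p.IsPath) :
    Gp.cut (interval i j) = {s(i - 1, i), s(j, j + 1)} ∪ pathChords Gp p :=
  stmt_4_general n Gp i j hij F1 F2 hF1 hF2 p hp
end

section
/- (Assignment version of the path lemma.) Let e_1,…,e_a be items with nonnegative capacities c(e_1),…,c(e_a), and let g_1,…,g_b be demands with nonnegative values d(g_1),…,d(g_b) each at most d_max. If ∑_i d(g_i) ≤ d_max + ∑_j c(e_j), then there is an assignment σ of demands to items such that for every item e, the total demand assigned to e is at most c(e) + d_max. -/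
open scoped Classical

lemma greedy_subset {κ : Type} (d : κ → ℝ) (dmax c₀ : ℝ)
    (hdmax : ∀ g, d g ≤ dmax) (h0 : 0 ≤ dmax) (hc0 : 0 ≤ c₀) (s : Finset κ) :
    ∃ S ⊆ s, (∑ g ∈ S, d g ≤ c₀ + dmax) ∧ (S = s ∨ c₀ ≤ ∑ g ∈ S, d g) := by
  classical
  induction s using Finset.induction with
  | empty =>
    refine ⟨∅, Finset.Subset.refl _, ?_, Or.inl rfl⟩
    simp; positivity
  | @insert a s ha ih =>
    obtain ⟨S, hSsub, hSle, hScase⟩ := ih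
    by_cases h' : c₀ ≤ ∑ g ∈ S, d g
    · exact ⟨S, hSsub.trans (Finset.subset_insert a s), hSle, Or.inr h'⟩
    · rcases hScase with rfl | h''
      · refine ⟨insert a S, Finset.Subset.refl _, ?_, Or.inl rfl⟩
        rw [Finset.sum_insert ha]
        push_neg at h'
        have := hdmax a
        linarith
      · exact absurd h'' h'

lemma aux_assign : ∀ (n : ℕ) {ι κ : Type} [Fintype ι] [Fintype κ] [Nonempty ι]
    (c : ι → ℝ) (d : κ → ℝ) (dmax : ℝ),
    (∀ i, 0 ≤ c i) → (∀ g, 0 ≤ d g) → (∀ g, d g ≤ dmax) → 0 ≤ dmax →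
    ∀ s : Finset κ, Fintype.card ι = n →
    (∑ g ∈ s, d g ≤ dmax + ∑ i, c i) →
    ∃ σ : κ → ι, ∀ i, (∑ g ∈ s, if σ g = i then d g else 0) ≤ c i + dmax := by
  intro n
  induction n with
  | zero =>
    intro ι κ _ _ _ c d dmax hc hd hdmax h0 s hn hsum
    exact absurd hn Fintype.card_ne_zero
  | succ n ih =>
    intro ι κ _ _ _ c d dmax hc hd hdmax h0 s hn hsum
    rcases Nat.eq_zero_or_pos n with rfl | hnpos
    · -- card ι = 1
      obtain ⟨i₀, hi₀⟩ := Fintype.card_eq_one_iff.mp hn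
      refine ⟨fun _ => i₀, fun j => ?_⟩
      have hcsum : ∑ x, c x = c i₀ := by
        rw [show (Finset.univ : Finset ι) = {i₀} from Finset.eq_singleton_iff_unique_mem.mpr
          ⟨Finset.mem_univ _, fun x _ => hi₀ x⟩, Finset.sum_singleton]
      have hj : j = i₀ := hi₀ j
      have hds : (∑ g ∈ s, if (fun _ => i₀) g = j then d g else 0) = ∑ g ∈ s, d g :=
        Finset.sum_congr rfl fun g _ => if_pos (hj ▸ rfl)
      rw [hds, hj]
      rw [hcsum] at hsum
      linarith
    · -- card ι = n + 1, n ≥ 1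
      obtain ⟨i₀⟩ := (inferInstance : Nonempty ι)
      obtain ⟨S, hSsub, hSle, hScase⟩ := greedy_subset d dmax (c i₀) hdmax h0 (hc i₀) s
      set ι' := {x : ι // x ≠ i₀} with hι'
      have hcard' : Fintype.card ι' = n := by
        have := Fintype.card_subtype_compl (fun x : ι => x = i₀)
        simp only [Fintype.card_subtype_eq, hn] at this
        simpa [ι'] using this
      haveI : Nonempty ι' := Fintype.card_pos_iff.mp (by omega)
      have hsub_sum : ∑ i' : ι', c i'.1 = ∑ x, c x - c i₀ := by
        rw [← Finset.sum_subtype (Finset.univ.erase i₀)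
          (fun x => by simp [ι']) (fun x => c x)]
        exact Finset.sum_erase_eq_sub (Finset.mem_univ i₀)
      have hrest : ∑ g ∈ s \ S, d g ≤ dmax + ∑ i' : ι', c i'.1 := by
        rw [hsub_sum, Finset.sum_sdiff_eq_sub hSsub]
        rcases hScase with rfl | hge
        · have : (0:ℝ) ≤ ∑ x, c x - c i₀ := by
            rw [← hsub_sum]
            exact Finset.sum_nonneg fun i' _ => hc i'.1
          simp only [sub_self]; linarith
        · linarith
      obtain ⟨σ', hσ'⟩ := ih (fun i' : ι' => c i'.1) d dmax (fun i' => hc i'.1)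
        hd hdmax h0 (s \ S) hcard' hrest
      refine ⟨fun g => if g ∈ S then i₀ else (σ' g).1, fun j => ?_⟩
      rw [← Finset.sum_sdiff hSsub]
      by_cases hj : j = i₀
      · have h1 : ∑ g ∈ s \ S, (if (if g ∈ S then i₀ else (σ' g).1) = j then d g else 0) = 0 := by
          apply Finset.sum_eq_zero
          intro g hg
          have hgS : g ∉ S := (Finset.mem_sdiff.mp hg).2
          rw [hj]
          simp [hgS, (σ' g).2]
        have h2 : ∑ g ∈ S, (if (if g ∈ S then i₀ else (σ' g).1) = j then d g else 0)
            = ∑ g ∈ S, d g := by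
          apply Finset.sum_congr rfl
          intro g hg
          rw [hj]
          simp [hg]
        rw [h1, h2, zero_add, hj]
        exact hSle
      · have h1 : ∑ g ∈ S, (if (if g ∈ S then i₀ else (σ' g).1) = j then d g else 0) = 0 := by
          apply Finset.sum_eq_zero
          intro g hg
          simp [hg, Ne.symm hj]
        rw [h1, add_zero]
        have key := hσ' ⟨j, hj⟩
        refine le_trans (le_of_eq ?_) key
        apply Finset.sum_congr rfl
        intro g hg
        have hgS : g ∉ S := (Finset.mem_sdiff.mp hg).2
        by_cases hgi : σ' g = ⟨j, hj⟩
        · have hv : (σ' g).1 = j := by rw [hgi]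
          simp [hgS, hgi, hv]
        · have hv : (σ' g).1 ≠ j := fun h => hgi (Subtype.ext h)
          simp [hgS, hgi, hv]

/-- **Assignment version of the path lemma.**
Items `ι` with nonnegative capacities `c`, demands `κ` with nonnegative values `d` each at most
`dmax`.  If the total demand is at most `dmax` plus the total capacity, then the demands can be
assigned to items so that each item receives at most its capacity plus `dmax`. -/
theorem stmt_8 {ι κ : Type} [Fintype ι] [Fintype κ] [Nonempty ι]
    (c : ι → ℝ) (d : κ → ℝ) (dmax : ℝ)
    (hc : ∀ i, 0 ≤ c i) (hd : ∀ g, 0 ≤ d g) (hdmax : ∀ g, d g ≤ dmax) (h0 : 0 ≤ dmax)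
    (hsum : ∑ g, d g ≤ dmax + ∑ i, c i) :
    ∃ σ : κ → ι, ∀ i, (∑ g, if σ g = i then d g else 0) ≤ c i + dmax := by
  exact aux_assign (Fintype.card ι) c d dmax hc hd hdmax h0 Finset.univ rfl hsum
end

section
/- Let f = i_1 i_2 ⋯ i_ℓ i_1 (ℓ ≥ 3) be an ear of a 2-vertex-connected graph G (so that removing the internal vertices i_2,…,i_{ℓ−1} disconnects all edges E(i_j, i_{j+1}) for j ∈ [ℓ−1] from the rest). Suppose the instance I(G,c,D,d) satisfies the cut-condition, every demand in D(i_j,i_{j+1}) has endpoints {i_j, i_{j+1}}, and d_max is the maximum demand. Then there cannot exist two distinct indices j < j' in [ℓ−1] with ∑_{g ∈ D(i_j,i_{j+1})} d(g) > d_max + ∑_{e ∈ E(i_j,i_{j+1})} c(e) and ∑_{g ∈ D(i_{j'},i_{j'+1})} d(g) > d_max + ∑_{e ∈ E(i_{j'},i_{j'+1})} c(e). -/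
open scoped Classical

/-- Walks in a multigraph whose edge-endpoints are given by `ends`, recording the list of
visited vertices. -/
inductive IsWalkVia {V E : Type} (ends : E → V × V) : V → V → List E → List V → Prop
  | nil (v : V) : IsWalkVia ends v v [] [v]
  | cons {u w v : V} {e : E} {l : List E} {vs : List V} :
      (ends e = (u, w) ∨ ends e = (w, u)) → IsWalkVia ends w v l vs →
      IsWalkVia ends u v (e :: l) (u :: vs)

/-- `l` is (the edge list of) a simple path from `u` to `v` in the multigraph `ends`. -/
def IsPathList {V E : Type} (ends : E → V × V) (u v : V) (l : List E) : Prop :=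
  ∃ vs : List V, IsWalkVia ends u v l vs ∧ vs.Nodup

/-- The cut-condition for a multicommodity flow instance with supply edges `E` (endpoints
`ends`, capacities `c`) and demand edges `Dm` (endpoints `endsD`, values `d`): across every
cut, the total capacity is at least the total demand. -/
def CutCond {V E Dm : Type} [Fintype E] [Fintype Dm]
    (ends : E → V × V) (c : E → ℝ) (endsD : Dm → V × V) (d : Dm → ℝ) : Prop :=
  ∀ S : Set V,
    (∑ g : Dm, if (((endsD g).1 ∈ S) ≠ ((endsD g).2 ∈ S)) then d g else 0) ≤
      ∑ e : E, if (((ends e).1 ∈ S) ≠ ((ends e).2 ∈ S)) then c e else 0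

/-- The flow through edge `e` in an unsplittable routing `route`. -/
noncomputable def load {E Dm : Type} [Fintype Dm] [DecidableEq E]
    (route : Dm → List E) (d : Dm → ℝ) (e : E) : ℝ :=
  ∑ g : Dm, if e ∈ route g then d g else 0

/-- `x` lies strictly between `a` and `b` in the clockwise cyclic order of `Fin n`. -/
def btwc {n : ℕ} (a x b : Fin n) : Prop := (a < x ∧ x < b) ∨ (b < a ∧ (a < x ∨ x < b))

/-- Two chords of a circle (given by the pairs of positions of their endpoints) strictly
cross: their endpoints interleave. -/
def PairCross {n : ℕ} (p q : Fin n × Fin n) : Prop :=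
  (btwc p.1 q.1 p.2 ∧ btwc p.2 q.2 p.1) ∨ (btwc p.1 q.2 p.2 ∧ btwc p.2 q.1 p.1)

/-- The multigraph `ends` is outerplanar: its vertices can be placed on a circle so that all
its edges, drawn as chords, are pairwise noncrossing. -/
def Outerplanar {V E : Type} [Fintype V] (ends : E → V × V) : Prop :=
  ∃ ord : V ≃ Fin (Fintype.card V), ∀ e e' : E, e ≠ e' →
    ¬ PairCross (ord (ends e).1, ord (ends e).2) (ord (ends e').1, ord (ends e').2)

/-- **At most one heavy gap on an ear.**
`i 0, …, i (ℓ-1)` are the (distinct) vertices of an ear `f` of `G`.  The ear property says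
that for gaps `j < j'`, the supply edges crossing the cut `S = {i (j+1), …, i j'}` are exactly
the parallel classes `E(i j, i (j+1))` and `E(i j', i (j'+1))`.  If the cut-condition holds,
then there cannot be two distinct gaps `j < j'` whose total demand exceeds `dmax` plus their
total capacity. -/
theorem stmt_9 {V E Dm : Type} [Fintype V] [Fintype E] [Fintype Dm]
    (ends : E → V × V) (c : E → ℝ) (endsD : Dm → V × V) (d : Dm → ℝ) (dmax : ℝ)
    (ℓ : ℕ) [NeZero ℓ] (hℓ : 3 ≤ ℓ) (i : Fin ℓ → V) (hi : Function.Injective i)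
    (hc : ∀ e, 0 ≤ c e) (hd : ∀ g, 0 ≤ d g) (hdmax : ∀ g, d g ≤ dmax) (h0 : 0 ≤ dmax)
    (hEar : ∀ j j' : Fin ℓ, (j : ℕ) < j' → (j' : ℕ) + 1 < ℓ → ∀ e : E,
      (((ends e).1 ∈ {x : V | ∃ k : Fin ℓ, x = i k ∧ (j : ℕ) < k ∧ (k : ℕ) ≤ j'}) ≠
        ((ends e).2 ∈ {x : V | ∃ k : Fin ℓ, x = i k ∧ (j : ℕ) < k ∧ (k : ℕ) ≤ j'})) →
      (ends e = (i j, i (j + 1)) ∨ ends e = (i (j + 1), i j)) ∨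
      (ends e = (i j', i (j' + 1)) ∨ ends e = (i (j' + 1), i j')))
    (hcut : CutCond ends c endsD d) :
    ¬ ∃ j j' : Fin ℓ, (j : ℕ) < j' ∧ (j' : ℕ) + 1 < ℓ ∧
      (dmax + (∑ e, if ends e = (i j, i (j + 1)) ∨ ends e = (i (j + 1), i j) then c e else 0) <
        ∑ g, if endsD g = (i j, i (j + 1)) ∨ endsD g = (i (j + 1), i j) then d g else 0) ∧
      (dmax + (∑ e, if ends e = (i j', i (j' + 1)) ∨ ends e = (i (j' + 1), i j') then c e else 0) <
        ∑ g, if endsD g = (i j', i (j' + 1)) ∨ endsD g = (i (j' + 1), i j') then d g else 0) := by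
  rintro ⟨j, j', hjj', hj'ℓ, hAj, hAj'⟩
  have hj1 : ((j + 1 : Fin ℓ) : ℕ) = (j : ℕ) + 1 := by
    have h1 : ((1 : Fin ℓ) : ℕ) = 1 := by
      rw [Fin.val_one']; exact Nat.mod_eq_of_lt (by omega)
    rw [Fin.val_add, h1, Nat.mod_eq_of_lt (by omega)]
  have hj'1 : ((j' + 1 : Fin ℓ) : ℕ) = (j' : ℕ) + 1 := by
    have h1 : ((1 : Fin ℓ) : ℕ) = 1 := by
      rw [Fin.val_one']; exact Nat.mod_eq_of_lt (by omega)
    rw [Fin.val_add, h1, Nat.mod_eq_of_lt (by omega)]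
  obtain ⟨S, hS⟩ : ∃ S : Set V,
      {x : V | ∃ k : Fin ℓ, x = i k ∧ (j : ℕ) < k ∧ (k : ℕ) ≤ j'} = S := ⟨_, rfl⟩
  have hEar' := hEar j j' hjj' hj'ℓ
  rw [hS] at hEar'
  have hjS : i j ∉ S := by
    rw [← hS]
    rintro ⟨k, hk, h1, h2⟩
    have := congrArg Fin.val (hi hk); omega
  have hj1S : i (j + 1) ∈ S := hS ▸ ⟨j + 1, rfl, by omega, by omega⟩
  have hj'S : i j' ∈ S := hS ▸ ⟨j', rfl, hjj', le_refl _⟩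
  have hj'1S : i (j' + 1) ∉ S := by
    rw [← hS]
    rintro ⟨k, hk, h1, h2⟩
    have := congrArg Fin.val (hi hk); omega
  have hPQ : ∀ (P Q : Prop), P → ¬Q → P ≠ Q := fun P Q hP hQ h => hQ (h ▸ hP)
  -- disjointness of the two gap classes for a pair p
  have hdisj : ∀ p : V × V,
      (p = (i j, i (j + 1)) ∨ p = (i (j + 1), i j)) →
      (p = (i j', i (j' + 1)) ∨ p = (i (j' + 1), i j')) → False := by
    rintro p (h | h) (h' | h') <;> rw [h] at h' <;>
      simp only [Prod.mk.injEq] at h' <;> obtain ⟨e1, e2⟩ := h' <;>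
      have t1 := congrArg Fin.val (hi e1) <;> have t2 := congrArg Fin.val (hi e2) <;> omega
  -- crossing of gap pairs
  have hcrossj : ∀ p : V × V, (p = (i j, i (j + 1)) ∨ p = (i (j + 1), i j)) →
      ((p.1 ∈ S) ≠ (p.2 ∈ S)) := by
    rintro p (h | h) <;> rw [h]
    · exact fun hq => hjS (hq ▸ hj1S)
    · exact hPQ _ _ hj1S hjS
  have hcrossj' : ∀ p : V × V, (p = (i j', i (j' + 1)) ∨ p = (i (j' + 1), i j')) →
      ((p.1 ∈ S) ≠ (p.2 ∈ S)) := by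
    rintro p (h | h) <;> rw [h]
    · exact hPQ _ _ hj'S hj'1S
    · exact fun hq => hj'1S (hq ▸ hj'S)
  have hcutS := hcut S
  have hD : (∑ g, if endsD g = (i j, i (j + 1)) ∨ endsD g = (i (j + 1), i j) then d g else 0) +
      (∑ g, if endsD g = (i j', i (j' + 1)) ∨ endsD g = (i (j' + 1), i j') then d g else 0) ≤
      ∑ g : Dm, if (((endsD g).1 ∈ S) ≠ ((endsD g).2 ∈ S)) then d g else 0 := by
    rw [← Finset.sum_add_distrib]
    apply Finset.sum_le_sum
    intro g _
    by_cases h1 : endsD g = (i j, i (j + 1)) ∨ endsD g = (i (j + 1), i j)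
    · by_cases h2 : endsD g = (i j', i (j' + 1)) ∨ endsD g = (i (j' + 1), i j')
      · exact absurd h2 (fun h2 => hdisj _ h1 h2)
      · rw [if_pos h1, if_neg h2, if_pos (hcrossj _ h1)]; linarith
    · rw [if_neg h1]
      by_cases h2 : endsD g = (i j', i (j' + 1)) ∨ endsD g = (i (j' + 1), i j')
      · rw [if_pos h2, if_pos (hcrossj' _ h2)]; linarith
      · rw [if_neg h2]
        simp only [zero_add]
        split <;> [exact hd g; exact le_refl 0]
  have hC : (∑ e : E, if (((ends e).1 ∈ S) ≠ ((ends e).2 ∈ S)) then c e else 0) ≤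
      (∑ e, if ends e = (i j, i (j + 1)) ∨ ends e = (i (j + 1), i j) then c e else 0) +
      (∑ e, if ends e = (i j', i (j' + 1)) ∨ ends e = (i (j' + 1), i j') then c e else 0) := by
    rw [← Finset.sum_add_distrib]
    apply Finset.sum_le_sum
    intro e _
    by_cases hx : (((ends e).1 ∈ S) ≠ ((ends e).2 ∈ S))
    · rw [if_pos hx]
      rcases hEar' e hx with h1 | h2
      · rw [if_pos h1]
        have : (0:ℝ) ≤ if ends e = (i j', i (j' + 1)) ∨ ends e = (i (j' + 1), i j')
            then c e else 0 := by split <;> [exact hc e; exact le_refl 0]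
        linarith
      · rw [if_pos h2]
        have : (0:ℝ) ≤ if ends e = (i j, i (j + 1)) ∨ ends e = (i (j + 1), i j)
            then c e else 0 := by split <;> [exact hc e; exact le_refl 0]
        linarith
    · rw [if_neg hx]
      have h3 : (0:ℝ) ≤ if ends e = (i j, i (j + 1)) ∨ ends e = (i (j + 1), i j)
          then c e else 0 := by split <;> [exact hc e; exact le_refl 0]
      have h4 : (0:ℝ) ≤ if ends e = (i j', i (j' + 1)) ∨ ends e = (i (j' + 1), i j')
          then c e else 0 := by split <;> [exact hc e; exact le_refl 0]
      linarith
  have hchain : ((∑ g : Dm, if endsD g = (i j, i (j + 1)) ∨ endsD g = (i (j + 1), i j) then d g else 0) +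
      ∑ g : Dm, if endsD g = (i j', i (j' + 1)) ∨ endsD g = (i (j' + 1), i j') then d g else 0) ≤
      (∑ e : E, if ends e = (i j, i (j + 1)) ∨ ends e = (i (j + 1), i j) then c e else 0) +
      ∑ e : E, if ends e = (i j', i (j' + 1)) ∨ ends e = (i (j' + 1), i j') then c e else 0 :=
    le_trans hD (le_trans hcutS hC)
  linarith
end
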